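/- For any subset $H$ of a unital associative $K$-algebra $R$ and all $p,q\ge1$, the product of Lie centralizers satisfies $\mathrm{L}_p(H)\cdot\mathrm{L}_q(H)\subseteq\mathrm{L}_{p+q-1}(H)$; that is, if $r\in\mathrm{L}_p(H)$ and $s\in\mathrm{L}_q(H)$ then $rs\in\mathrm{L}_{p+q-1}(H)$. -/

import Mathlib

/-! By the Leibniz rule `[rs, x] = [r, x] s + r [s, x]`, each commutator with an element of `H`
moves one of the two factors one step down its chain of Lie centralizers, and `L₀(H) = {0}`.
After `p + q - 1` commutators, some factor has therefore reached `0`. -/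

/-- `lprod r [x₁, …, xₘ]` is the left-normed commutator `[r, x₁, …, xₘ]_{m+1}`. -/
def lprod {R : Type*} [Ring R] (r : R) (l : List R) : R :=
  l.foldl (fun a x => a * x - x * a) r

/-- The `k`-th Lie centralizer of a subset `H` of `R`:
`Lcen k H = {r : R | [r, x₁, …, x_k]_{k+1} = 0 for all xᵢ ∈ H}`. -/
def Lcen {R : Type*} [Ring R] (k : ℕ) (H : Set R) : Set R :=
  {r : R | ∀ x : Fin k → R, (∀ i, x i ∈ H) → lprod r (List.ofFn x) = 0}

section

variable {R : Type*} [Ring R]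

@[simp]
lemma lprod_nil (r : R) : lprod r [] = r := rfl

lemma lprod_cons (r x : R) (l : List R) : lprod r (x :: l) = lprod (r * x - x * r) l := rfl

@[simp]
lemma lprod_zero (l : List R) : lprod (0 : R) l = 0 := by
  induction l with
  | nil => rfl
  | cons x l ih => simpa [lprod_cons] using ih

lemma lprod_add (a b : R) (l : List R) : lprod (a + b) l = lprod a l + lprod b l := by
  induction l generalizing a b with
  | nil => rfl
  | cons x l ih =>
    rw [lprod_cons, lprod_cons, lprod_cons, ← ih]
    congr 1
    noncomm_ring

lemma commutator_mul (r s x : R) :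
    r * s * x - x * (r * s) = (r * x - x * r) * s + r * (s * x - x * s) := by
  noncomm_ring

lemma mem_Lcen_iff {k : ℕ} {H : Set R} {r : R} :
    r ∈ Lcen k H ↔ ∀ l : List R, l.length = k → (∀ x ∈ l, x ∈ H) → lprod r l = 0 := by
  refine ⟨fun hr l hlen hl => ?_, fun hr x hx => ?_⟩
  · subst hlen
    simpa only [List.ofFn_get] using hr l.get fun i => hl _ (List.get_mem l i)
  · refine hr _ (List.length_ofFn) fun y hy => ?_
    obtain ⟨i, rfl⟩ := List.mem_ofFn.mp hy
    exact hx i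

lemma eq_zero_of_mem_Lcen_zero {H : Set R} {r : R} (hr : r ∈ Lcen 0 H) : r = 0 :=
  mem_Lcen_iff.mp hr [] rfl (by simp)

lemma commutator_mem_Lcen {k : ℕ} {H : Set R} {r x : R} (hr : r ∈ Lcen (k + 1) H)
    (hx : x ∈ H) : r * x - x * r ∈ Lcen k H := by
  rw [mem_Lcen_iff] at hr ⊢
  intro l hlen hl
  rw [← lprod_cons]
  exact hr (x :: l) (by simp [hlen]) (by simpa [hx] using hl)

lemma lprod_mul_eq_zero {H : Set R} {l : List R} (hl : ∀ x ∈ l, x ∈ H) {a b : ℕ} {r s : R}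
    (hr : r ∈ Lcen a H) (hs : s ∈ Lcen b H) (hab : a + b ≤ l.length + 1) :
    lprod (r * s) l = 0 := by
  induction l generalizing a b r s with
  | nil =>
    obtain rfl | rfl : a = 0 ∨ b = 0 := by simp at hab; omega
    · simp [eq_zero_of_mem_Lcen_zero hr]
    · simp [eq_zero_of_mem_Lcen_zero hs]
  | cons x l ih =>
    rcases a with _ | a
    · simp [eq_zero_of_mem_Lcen_zero hr]
    rcases b with _ | b
    · simp [eq_zero_of_mem_Lcen_zero hs]
    have hx : x ∈ H := hl x List.mem_cons_self
    have hl' : ∀ y ∈ l, y ∈ H := fun y hy => hl y (List.mem_cons_of_mem x hy)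
    simp only [List.length_cons] at hab
    rw [lprod_cons, commutator_mul, lprod_add,
      ih hl' (commutator_mem_Lcen hr hx) hs (by omega),
      ih hl' hr (commutator_mem_Lcen hs hx) (by omega), add_zero]

end

theorem Lcen_mul_subset_general {R : Type*} [Ring R]
    (H : Set R) {p q : ℕ}
    {r s : R} (hr : r ∈ Lcen p H) (hs : s ∈ Lcen q H) :
    r * s ∈ Lcen (p + q - 1) H :=
  mem_Lcen_iff.mpr fun _ hlen hl => lprod_mul_eq_zero hl hr hs (by omega)

/-- Products of Lie centralizers: `L_p(H) · L_q(H) ⊆ L_{p+q-1}(H)`. -/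
theorem Lcen_mul_subset {K : Type*} [Field K] {R : Type*} [Ring R] [Algebra K R]
    (H : Set R) {p q : ℕ} (hp : 1 ≤ p) (hq : 1 ≤ q)
    {r s : R} (hr : r ∈ Lcen p H) (hs : s ∈ Lcen q H) :
    r * s ∈ Lcen (p + q - 1) H :=
  Lcen_mul_subset_general H hr hs
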